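/- arXiv:1709.05739 — 6 statements merged into one kernel-verified Lean document; each statement's English description precedes it below -/
import Mathlib

section
/- Let F : X ⊸ X be a surjective set-valued map on a compact metric space X that is RW-expansive with expansivity constant δ > 0. Then for all x, y ∈ X with 0 < dist(x,y) < δ, either F(x) ∩ F(y) = ∅ or F⁻¹(x) ∩ F⁻¹(y) = ∅. -/
private def stmt5Orbit {X : Type*} (f b : ℕ → X) (c : X) : ℤ → X
  | Int.ofNat 0 => c
  | Int.ofNat (m + 1) => f m
  | Int.negSucc m => b m

private lemma stmt5Orbit_zero {X : Type*} (f b : ℕ → X) (c : X) :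
    stmt5Orbit f b c 0 = c := rfl

private lemma stmt5Orbit_pos {X : Type*} (f b : ℕ → X) (c : X) (m : ℕ) :
    stmt5Orbit f b c (Int.ofNat (m + 1)) = f m := rfl

private lemma stmt5Orbit_neg {X : Type*} (f b : ℕ → X) (c : X) (m : ℕ) :
    stmt5Orbit f b c (Int.negSucc m) = b m := rfl

private lemma stmt5_step {X : Type*} (F : X → Set X) (f b : ℕ → X) (c z : X)
    (hf0 : f 0 = z) (hf : ∀ n, f (n + 1) ∈ F (f n)) (hb : ∀ n, b n ∈ F (b (n + 1)))
    (hc1 : c ∈ F (b 0)) (hc2 : z ∈ F c) :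
    ∀ n : ℤ, stmt5Orbit f b c (n + 1) ∈ F (stmt5Orbit f b c n) := by
  intro n
  match n with
  | Int.ofNat 0 =>
      have e : (Int.ofNat 0 : ℤ) + 1 = Int.ofNat 1 := rfl
      rw [e, stmt5Orbit_pos, hf0]
      exact hc2
  | Int.ofNat (m + 1) =>
      have e : (Int.ofNat (m + 1) : ℤ) + 1 = Int.ofNat (m + 2) := rfl
      rw [e, stmt5Orbit_pos, stmt5Orbit_pos]
      exact hf m
  | Int.negSucc 0 =>
      have e : (Int.negSucc 0 : ℤ) + 1 = 0 := rfl
      rw [e, stmt5Orbit_zero, stmt5Orbit_neg]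
      exact hc1
  | Int.negSucc (m + 1) =>
      have e : (Int.negSucc (m + 1) : ℤ) + 1 = Int.negSucc m := rfl
      rw [e, stmt5Orbit_neg, stmt5Orbit_neg]
      exact hb m

/-- an RW-expansive surjective set-valued map with constant `δ` enjoys a
local injectivity property: points at positive distance less than `δ` have either
disjoint images or disjoint preimages. -/
theorem stmt5 {X : Type*} [MetricSpace X] [CompactSpace X]
    (F : X → Set X) (hne : ∀ x, (F x).Nonempty) (hsurj : ∀ y : X, ∃ x, y ∈ F x)
    (δ : ℝ) (hδ : 0 < δ)
    (hRW : ∀ x y : X, x ≠ y → ∀ ox oy : ℤ → X, ox 0 = x → oy 0 = y →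
      (∀ n : ℤ, ox (n + 1) ∈ F (ox n)) → (∀ n : ℤ, oy (n + 1) ∈ F (oy n)) →
      ∃ j : ℤ, δ < dist (ox j) (oy j)) :
    ∀ x y : X, 0 < dist x y → dist x y < δ →
      F x ∩ F y = ∅ ∨ {z | x ∈ F z} ∩ {z | y ∈ F z} = ∅ := by
  intro x y hpos hlt
  by_contra hcon
  push_neg at hcon
  obtain ⟨h1, h2⟩ := hcon
  obtain ⟨z, hzx, hzy⟩ := h1
  obtain ⟨w, hwx, hwy⟩ := h2
  have hxy : x ≠ y := dist_pos.mp hpos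
  obtain ⟨f, hf0, hf⟩ : ∃ f : ℕ → X, f 0 = z ∧ ∀ n, f (n + 1) ∈ F (f n) :=
    ⟨fun n => Nat.rec z (fun _ p => (hne p).choose) n, rfl,
      fun n => (hne _).choose_spec⟩
  obtain ⟨b, hb0, hb⟩ : ∃ b : ℕ → X, b 0 = w ∧ ∀ n, b n ∈ F (b (n + 1)) :=
    ⟨fun n => Nat.rec w (fun _ p => (hsurj p).choose) n, rfl,
      fun n => (hsurj _).choose_spec⟩
  obtain ⟨j, hj⟩ := hRW x y hxy (stmt5Orbit f b x) (stmt5Orbit f b y) rfl rfl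
    (stmt5_step F f b x z hf0 hf hb (by rw [hb0]; exact hwx) hzx)
    (stmt5_step F f b y z hf0 hf hb (by rw [hb0]; exact hwy) hzy)
  match j with
  | Int.ofNat 0 =>
      rw [show (Int.ofNat 0 : ℤ) = 0 from rfl, stmt5Orbit_zero, stmt5Orbit_zero] at hj
      exact absurd hj (not_lt.mpr hlt.le)
  | Int.ofNat (m + 1) =>
      rw [stmt5Orbit_pos, stmt5Orbit_pos, dist_self] at hj
      exact absurd hj (not_lt.mpr hδ.le)
  | Int.negSucc m =>
      rw [stmt5Orbit_neg, stmt5Orbit_neg, dist_self] at hj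
      exact absurd hj (not_lt.mpr hδ.le)
end

section
/- The set-valued map F on the circle S¹ defined by F(z) = {z², −z²} is positively expansive: there exists α > 0 such that for all z ≠ w in S¹ there is n ∈ ℕ with d_H(Fⁿ(z), Fⁿ(w)) > α. -/
open Metric

/-- The set-valued map `F z = {z², -z²}` on the unit circle in `ℂ`. -/
noncomputable def FC : ℂ → Set ℂ := fun z => {z ^ 2, -z ^ 2}

/-- Iterates of the set-valued map `FC` starting from a set. -/
noncomputable def iterFC : ℕ → Set ℂ → Set ℂ
  | 0, K => K
  | n + 1, K => ⋃ y ∈ iterFC n K, FC y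

/-!
`signDist a b = min ‖a - b‖ ‖a + b‖` is the distance from `a` to `{b, -b}`, a lower bound for the
Hausdorff distance between `{a, -a}` and `{b, -b}`. For unit vectors the parallelogram law gives
`‖a - b‖² + ‖a + b‖² = 4`, so when `signDist a b ≤ 1/2` the larger factor is at least `3/2` and
`‖a² - b²‖ = ‖a - b‖ ‖a + b‖` is at least `(3/2) signDist a b` and at most `1`, hence the smaller
of `‖a² ∓ b²‖`. So `signDist (z^(2ⁿ)) (w^(2ⁿ))` grows geometrically until it exceeds `1/2`,
unless it starts at `0`, i.e. `z = -w`, which is already separated at `n = 0`.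
-/

lemma iterFC_succ_singleton (z : ℂ) (n : ℕ) :
    iterFC (n + 1) {z} = {z ^ 2 ^ (n + 1), -z ^ 2 ^ (n + 1)} := by
  induction n with
  | zero => simp [iterFC, FC]
  | succ n ih =>
    rw [iterFC, ih, pow_succ 2 (n + 1), pow_mul]
    simp [FC]

noncomputable def signDist {E : Type*} [SeminormedAddCommGroup E] (a b : E) : ℝ :=
  min ‖a - b‖ ‖a + b‖

lemma signDist_le_hausdorffDist {E : Type*} [SeminormedAddCommGroup E] (a b : E) :
    signDist a b ≤ hausdorffDist {a, -a} {b, -b} := by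
  have hfin : hausdorffEDist ({a, -a} : Set E) {b, -b} ≠ ⊤ :=
    hausdorffEDist_ne_top_of_nonempty_of_bounded (Set.insert_nonempty _ _)
      (Set.insert_nonempty _ _) (Set.toFinite _).isBounded (Set.toFinite _).isBounded
  refine le_trans ?_ (infDist_le_hausdorffDist_of_mem (Set.mem_insert a _) hfin)
  rw [le_infDist (Set.insert_nonempty _ _)]
  rintro y (rfl | rfl)
  · exact (min_le_left _ _).trans_eq (dist_eq_norm _ _).symm
  · exact (min_le_right _ _).trans_eq (by rw [dist_eq_norm, sub_neg_eq_add])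

lemma signDist_le_hausdorffDist_iterFC (z w : ℂ) (n : ℕ) :
    signDist (z ^ 2 ^ n) (w ^ 2 ^ n) ≤ hausdorffDist (iterFC n {z}) (iterFC n {w}) := by
  cases n with
  | zero =>
    simp only [iterFC, pow_zero, pow_one, hausdorffDist_singleton, dist_eq_norm]
    exact min_le_left _ _
  | succ n =>
    rw [iterFC_succ_singleton, iterFC_succ_singleton]
    exact signDist_le_hausdorffDist _ _

lemma three_halves_mul_min_le_min_mul {p q r : ℝ} (hp : 0 ≤ p) (hq : 0 ≤ q) (hr : 0 ≤ r)
    (hpq : p ^ 2 + q ^ 2 = 4) (hpqr : (p * q) ^ 2 + r ^ 2 = 4) (hsmall : min p q ≤ 1 / 2) :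
    3 / 2 * min p q ≤ min (p * q) r := by
  wlog hle : p ≤ q generalizing p q
  · rw [min_comm p q, mul_comm p q]
    exact this hq hp (by linarith) (by rwa [mul_comm q p]) (by rwa [min_comm q p]) (by linarith)
  rw [min_eq_left hle] at hsmall ⊢
  have hq_large : 3 / 2 ≤ q := by nlinarith
  have hq_le_two : q ≤ 2 := by nlinarith
  have hpq_le_one : p * q ≤ 1 := by nlinarith
  exact le_min (by nlinarith) (by nlinarith)

lemma norm_sub_sq_add_norm_add_sq {E : Type*} [NormedAddCommGroup E] [InnerProductSpace ℝ E]
    {a b : E} (ha : ‖a‖ = 1) (hb : ‖b‖ = 1) :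
    ‖a - b‖ ^ 2 + ‖a + b‖ ^ 2 = 4 := by
  have hpar := parallelogram_law_with_norm ℝ a b
  rw [ha, hb] at hpar
  linarith

lemma three_halves_mul_signDist_le_signDist_sq {a b : ℂ} (ha : ‖a‖ = 1) (hb : ‖b‖ = 1)
    (hsmall : signDist a b ≤ 1 / 2) : 3 / 2 * signDist a b ≤ signDist (a ^ 2) (b ^ 2) := by
  have hsq_sub : ‖a ^ 2 - b ^ 2‖ = ‖a - b‖ * ‖a + b‖ := by
    rw [← norm_mul]; ring_nf
  have hsq := norm_sub_sq_add_norm_add_sq (a := a ^ 2) (b := b ^ 2)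
    (by rw [norm_pow, ha, one_pow]) (by rw [norm_pow, hb, one_pow])
  unfold signDist at hsmall ⊢
  rw [hsq_sub] at hsq ⊢
  exact three_halves_mul_min_le_min_mul (norm_nonneg _) (norm_nonneg _) (norm_nonneg _)
    (norm_sub_sq_add_norm_add_sq ha hb) hsq hsmall

lemma exists_lt_of_mul_le_succ {u : ℕ → ℝ} {c r : ℝ} (h0 : 0 < u 0) (hr : 1 < r)
    (hgrow : ∀ n, u n ≤ c → r * u n ≤ u (n + 1)) : ∃ n, c < u n := by
  by_contra! hbounded
  have hgeom : ∀ n, r ^ n * u 0 ≤ u n := by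
    intro n
    induction n with
    | zero => simp
    | succ n ih =>
      calc r ^ (n + 1) * u 0 = r * (r ^ n * u 0) := by ring
        _ ≤ r * u n := by gcongr
        _ ≤ u (n + 1) := hgrow n (hbounded n)
  obtain ⟨n, hn⟩ := pow_unbounded_of_one_lt (c / u 0) hr
  rw [div_lt_iff₀ h0] at hn
  linarith [hgeom n, hbounded n]

lemma exists_half_lt_signDist_pow {z w : ℂ} (hz : ‖z‖ = 1) (hw : ‖w‖ = 1) (hne : z ≠ w)
    (hne_neg : z ≠ -w) : ∃ n : ℕ, 1 / 2 < signDist (z ^ 2 ^ n) (w ^ 2 ^ n) := by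
  refine exists_lt_of_mul_le_succ ?_ (by norm_num : (1 : ℝ) < 3 / 2) fun n hsmall => ?_
  · simpa [signDist, sub_eq_zero, add_eq_zero_iff_eq_neg] using ⟨hne, hne_neg⟩
  · rw [pow_succ, pow_mul, pow_mul]
    exact three_halves_mul_signDist_le_signDist_sq (by simp [hz]) (by simp [hw]) hsmall

/-- `F z = {z², -z²}` on `S¹` is positively expansive. -/
theorem stmt6 : ∃ α : ℝ, 0 < α ∧ ∀ z w : ℂ, ‖z‖ = 1 → ‖w‖ = 1 → z ≠ w →
    ∃ n : ℕ, α < hausdorffDist (iterFC n {z}) (iterFC n {w}) := by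
  refine ⟨1 / 2, by norm_num, fun z w hz hw hne => ?_⟩
  by_cases hneg : z = -w
  · refine ⟨0, ?_⟩
    have hdist : dist z w = 2 := by
      rw [hneg, dist_eq_norm, ← neg_add', norm_neg, ← two_mul, norm_mul, hw, Complex.norm_two, mul_one]
    simp only [iterFC, hausdorffDist_singleton, hdist]
    norm_num
  · obtain ⟨n, hn⟩ := exists_half_lt_signDist_pow hz hw hne hneg
    exact ⟨n, hn.trans_le (signDist_le_hausdorffDist_iterFC z w n)⟩
end

section
/- Let M be a compact metric space and F : M ⊸ M a positively expansive, Hausdorff-continuous set-valued map with compact values and expansivity constant α > 0. Then for every δ > 0 there exists n₀ ∈ ℕ such that for all x, y ∈ M with dist(x,y) ≥ δ, there exists j with 0 ≤ j ≤ n₀ and d_H(Fʲ(x), Fʲ(y)) ≥ α. -/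
open Metric TopologicalSpace

/-!
Lift `F` to `K ↦ ⋃ x ∈ K, F x` on nonempty compact sets. This lift is continuous, as one checks
directly on the Vietoris subbasis `{K | K ⊆ U}`, `{K | K ⊆ C}`, and on compact sets the Vietoris
topology is the Hausdorff metric topology; so `(x, y) ↦ d_H(Fⁿ(x), Fⁿ(y))` is continuous. The pairs
separated by more than `α` at time `n` thus form open sets, which by expansivity cover the compact
set `{(x, y) | δ ≤ dist x y}`, and a finite subcover bounds the separation time.
-/

/-- Iterates of a set-valued map `F` applied to a set. -/
noncomputable def iterS {M : Type*} (F : M → Set M) : ℕ → Set M → Set M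
  | 0, K => K
  | n + 1, K => ⋃ y ∈ iterS F n K, F y

theorem IsCompact.exists_subset_accumulate {X ι : Type*} [TopologicalSpace X] [Preorder ι]
    [IsDirected ι (· ≤ ·)] [Nonempty ι] {s : Set X} (hs : IsCompact s) {U : ι → Set X}
    (hU : ∀ i, IsOpen (U i)) (hsU : s ⊆ ⋃ i, U i) : ∃ i, s ⊆ Set.accumulate U i :=
  hs.elim_directed_cover _ (fun _ => isOpen_biUnion fun j _ => hU j)
    (by rwa [Set.iUnion_accumulate]) Set.monotone_accumulate.directed_le

namespace TopologicalSpace.NonemptyCompacts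

variable {α β : Type*} [TopologicalSpace α] [TopologicalSpace β]

def biUnion (K : NonemptyCompacts α) (F : α → NonemptyCompacts β) (hF : Continuous F) :
    NonemptyCompacts β where
  carrier := ⋃ x ∈ (K : Set α), F x
  isCompact' := by
    simpa [Set.biUnion_image] using isCompact_biUnion_coe_of_isCompact (K.isCompact.image hF)
  nonempty' := by
    obtain ⟨x, hx⟩ := K.nonempty
    exact (F x).nonempty.mono (Set.subset_biUnion_of_mem hx)

@[simp]
theorem coe_biUnion (K : NonemptyCompacts α) (F : α → NonemptyCompacts β) (hF : Continuous F) :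
    (K.biUnion F hF : Set β) = ⋃ x ∈ (K : Set α), (F x : Set β) := rfl

theorem preimage_powerset_biUnion (F : α → NonemptyCompacts β) (hF : Continuous F) (U : Set β) :
    (fun K : NonemptyCompacts α => (K.biUnion F hF : Set β)) ⁻¹' U.powerset =
      {K : NonemptyCompacts α | (K : Set α) ⊆ F ⁻¹' {L | (L : Set β) ⊆ U}} := by
  ext K
  simp only [Set.mem_preimage, Set.mem_powerset_iff, coe_biUnion, Set.iUnion₂_subset_iff]
  rfl

theorem continuous_biUnion {F : α → NonemptyCompacts β} (hF : Continuous F) :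
    Continuous fun K : NonemptyCompacts α => K.biUnion F hF := by
  let := TopologicalSpace.vietoris β
  rw [isEmbedding_coe.continuous_iff, vietoris.continuous_iff]
  refine ⟨fun U hU => ?_, fun C hC => ?_⟩
  · rw [Function.comp_def, preimage_powerset_biUnion]
    exact isOpen_subsets_of_isOpen ((isOpen_subsets_of_isOpen hU).preimage hF)
  · rw [Function.comp_def, preimage_powerset_biUnion]
    exact isClosed_subsets_of_isClosed ((isClosed_subsets_of_isClosed hC).preimage hF)

theorem coe_iterate_biUnion {F : α → NonemptyCompacts α} (hF : Continuous F) (n : ℕ)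
    (K : NonemptyCompacts α) :
    (((fun L => L.biUnion F hF)^[n] K : NonemptyCompacts α) : Set α) =
      iterS (fun x => (F x : Set α)) n K := by
  induction n with
  | zero => rfl
  | succ n ih => rw [Function.iterate_succ_apply', coe_biUnion, ih, iterS]

end TopologicalSpace.NonemptyCompacts

open TopologicalSpace.NonemptyCompacts in
theorem continuous_hausdorffDist_iterS {M : Type*} [MetricSpace M] {F : M → NonemptyCompacts M}
    (hF : Continuous F) (n : ℕ) :
    Continuous fun p : M × M => hausdorffDist (iterS (fun z => (F z : Set M)) n {p.1})
      (iterS (fun z => (F z : Set M)) n {p.2}) := by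
  have hFn : Continuous fun x : M => (fun K : NonemptyCompacts M => K.biUnion F hF)^[n] {x} :=
    ((continuous_biUnion hF).iterate n).comp continuous_singleton
  simp_rw [← coe_singleton, ← coe_iterate_biUnion hF, ← NonemptyCompacts.dist_eq]
  exact (hFn.comp continuous_fst).dist (hFn.comp continuous_snd)

theorem stmt8_general {M : Type*} [MetricSpace M] [CompactSpace M]
    (F : M → NonemptyCompacts M) (hF : Continuous F) (α : ℝ)
    (hexp : ∀ x y : M, x ≠ y → ∃ n : ℕ,
      α < hausdorffDist (iterS (fun z => (F z : Set M)) n {x})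
            (iterS (fun z => (F z : Set M)) n {y})) :
    ∀ δ : ℝ, 0 < δ → ∃ n₀ : ℕ, ∀ x y : M, δ ≤ dist x y →
      ∃ j ≤ n₀, α ≤ hausdorffDist (iterS (fun z => (F z : Set M)) j {x})
            (iterS (fun z => (F z : Set M)) j {y}) := by
  intro δ hδ
  have hfar : IsCompact {p : M × M | δ ≤ dist p.1 p.2} :=
    (isClosed_le continuous_const continuous_dist).isCompact
  have hsep_open (n : ℕ) : IsOpen {p : M × M | α < hausdorffDist
      (iterS (fun z => (F z : Set M)) n {p.1}) (iterS (fun z => (F z : Set M)) n {p.2})} :=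
    isOpen_lt continuous_const (continuous_hausdorffDist_iterS hF n)
  have hcover : {p : M × M | δ ≤ dist p.1 p.2} ⊆ ⋃ n, {p : M × M | α < hausdorffDist
      (iterS (fun z => (F z : Set M)) n {p.1}) (iterS (fun z => (F z : Set M)) n {p.2})} :=
    fun p hp => Set.mem_iUnion.2 (hexp p.1 p.2 (dist_pos.1 (hδ.trans_le hp)))
  obtain ⟨n₀, hn₀⟩ := hfar.exists_subset_accumulate hsep_open hcover
  refine ⟨n₀, fun x y hxy => ?_⟩
  obtain ⟨j, hj, hsep⟩ := Set.mem_accumulate.1 (hn₀ (show (x, y) ∈ _ from hxy))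
  exact ⟨j, hj, hsep.le⟩

/-- for a positively expansive Hausdorff-continuous set-valued map with
expansivity constant `α`, points at distance at least `δ` are `α`-separated (in the
Hausdorff metric of iterates) within a uniformly bounded number of iterates. -/
theorem stmt8 {M : Type*} [MetricSpace M] [CompactSpace M]
    (F : M → NonemptyCompacts M) (hF : Continuous F) (α : ℝ) (hα : 0 < α)
    (hexp : ∀ x y : M, x ≠ y → ∃ n : ℕ,
      α < hausdorffDist (iterS (fun z => (F z : Set M)) n {x})
            (iterS (fun z => (F z : Set M)) n {y})) :
    ∀ δ : ℝ, 0 < δ → ∃ n₀ : ℕ, ∀ x y : M, δ ≤ dist x y →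
      ∃ j ≤ n₀, α ≤ hausdorffDist (iterS (fun z => (F z : Set M)) j {x})
            (iterS (fun z => (F z : Set M)) j {y}) :=
  stmt8_general F hF α hexp
end

section
/- Let (M, dist) be a compact metric space whose metric is convex (for all distinct P, Q there exists R with dist(P,R) = dist(R,Q) = dist(P,Q)/2). Then for every pair of points P, Q ∈ M there is a continuous path γ : [0,1] → M with γ(0) = P, γ(1) = Q such that for every t ∈ [0,1], dist(P,Q) = dist(P, γ(t)) + dist(γ(t), Q). -/
/-!
Inserting midpoints repeatedly yields, at level `n`, points `g n k` (`0 ≤ k ≤ 2 ^ n`) with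
`g n 0 = P`, `g n (2 ^ n) = Q` and consecutive distances at most `d(P, Q) / 2 ^ n`. The points
`g n ⌊t 2 ^ n⌋` converge (by completeness, which compactness provides) to a `d(P, Q)`-Lipschitz
path. The chain `g n 0, …, g n (2 ^ n)` has length at most `d(P, Q)`, so each of its points `x`
satisfies `d(P, x) + d(x, Q) = d(P, Q)`; this closed condition passes to the limit.
-/

open Filter Topology

noncomputable section

lemma abs_natFloor_sub_natFloor_le {a b : ℝ} (ha : 0 ≤ a) (hb : 0 ≤ b) :
    |(⌊a⌋₊ : ℝ) - ⌊b⌋₊| ≤ |a - b| + 1 := by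
  have := Nat.floor_le ha; have := Nat.floor_le hb
  have := Nat.lt_floor_add_one a; have := Nat.lt_floor_add_one b
  rw [abs_le]; constructor <;> cases abs_cases (a - b) <;> linarith

namespace MidpointPath

variable {M : Type*} (mid : M → M → M) (P Q : M)

def dyadicGrid : ℕ → ℕ → M
  | 0, k => if k = 0 then P else Q
  | n + 1, k =>
      if k % 2 = 0 then dyadicGrid n (k / 2)
      else mid (dyadicGrid n (k / 2)) (dyadicGrid n (k / 2 + 1))

@[simp]
lemma dyadicGrid_zero (n : ℕ) : dyadicGrid mid P Q n 0 = P := by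
  induction n with
  | zero => simp [dyadicGrid]
  | succ n ih => simp [dyadicGrid, ih]

@[simp]
lemma dyadicGrid_two_pow (n : ℕ) : dyadicGrid mid P Q n (2 ^ n) = Q := by
  induction n with
  | zero => simp [dyadicGrid]
  | succ n ih => simp [dyadicGrid, pow_succ, ih]

lemma dyadicGrid_succ_two_mul (n k : ℕ) :
    dyadicGrid mid P Q (n + 1) (2 * k) = dyadicGrid mid P Q n k := by
  simp [dyadicGrid]

lemma dyadicGrid_succ_two_mul_add_one (n k : ℕ) :
    dyadicGrid mid P Q (n + 1) (2 * k + 1) =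
      mid (dyadicGrid mid P Q n k) (dyadicGrid mid P Q n (k + 1)) := by
  simp [dyadicGrid, Nat.add_mod, Nat.add_div]

variable [MetricSpace M] {mid}
  (hmid : ∀ a b, dist a (mid a b) ≤ dist a b / 2 ∧ dist (mid a b) b ≤ dist a b / 2)
include hmid

lemma dist_dyadicGrid_succ_le (n k : ℕ) :
    dist (dyadicGrid mid P Q n k) (dyadicGrid mid P Q n (k + 1)) ≤ dist P Q / 2 ^ n := by
  induction n generalizing k with
  | zero => rcases k with _ | k <;> simp [dyadicGrid]
  | succ n ih =>
    have half : dist P Q / 2 ^ n / 2 = dist P Q / 2 ^ (n + 1) := by ring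
    obtain ⟨j, rfl | rfl⟩ := Nat.even_or_odd' k
    · rw [dyadicGrid_succ_two_mul, dyadicGrid_succ_two_mul_add_one, ← half]
      exact (hmid _ _).1.trans (by gcongr; exact ih j)
    · rw [show 2 * j + 1 + 1 = 2 * (j + 1) by ring, dyadicGrid_succ_two_mul,
        dyadicGrid_succ_two_mul_add_one, ← half]
      exact (hmid _ _).2.trans (by gcongr; exact ih j)

lemma dist_dyadicGrid_le (n k l : ℕ) :
    dist (dyadicGrid mid P Q n k) (dyadicGrid mid P Q n l) ≤
      |(l : ℝ) - k| * (dist P Q / 2 ^ n) := by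
  wlog hkl : k ≤ l generalizing k l
  · rw [dist_comm, abs_sub_comm]; exact this l k (by omega)
  calc dist (dyadicGrid mid P Q n k) (dyadicGrid mid P Q n l)
      ≤ ∑ _ ∈ Finset.Ico k l, dist P Q / 2 ^ n :=
        dist_le_Ico_sum_of_dist_le hkl fun _ _ ↦ dist_dyadicGrid_succ_le P Q hmid n _
    _ = |(l : ℝ) - k| * (dist P Q / 2 ^ n) := by
        rw [Finset.sum_const, Nat.card_Ico, nsmul_eq_mul, Nat.cast_sub hkl,
          abs_of_nonneg (sub_nonneg.2 (by exact_mod_cast hkl))]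

lemma dist_add_dist_dyadicGrid {n k : ℕ} (hk : k ≤ 2 ^ n) :
    dist P (dyadicGrid mid P Q n k) + dist (dyadicGrid mid P Q n k) Q = dist P Q := by
  have hk' : (k : ℝ) ≤ 2 ^ n := by exact_mod_cast hk
  have h₁ := dist_dyadicGrid_le P Q hmid n 0 k
  have h₂ := dist_dyadicGrid_le P Q hmid n k (2 ^ n)
  simp only [dyadicGrid_zero, dyadicGrid_two_pow, Nat.cast_zero, sub_zero, Nat.cast_pow,
    Nat.cast_ofNat, Nat.abs_cast, abs_of_nonneg (sub_nonneg.2 hk')] at h₁ h₂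
  have : (k : ℝ) * (dist P Q / 2 ^ n) + (2 ^ n - k) * (dist P Q / 2 ^ n) = dist P Q := by
    field_simp; ring
  linarith [dist_triangle P (dyadicGrid mid P Q n k) Q]

variable (mid) in
def dyadicApprox (t : ℝ) (n : ℕ) : M := dyadicGrid mid P Q n ⌊t * 2 ^ n⌋₊

lemma dist_dyadicApprox_le {s t : ℝ} (hs : 0 ≤ s) (ht : 0 ≤ t) (n : ℕ) :
    dist (dyadicApprox mid P Q s n) (dyadicApprox mid P Q t n) ≤
      dist P Q * dist s t + dist P Q / 2 ^ n := by
  have hfloor := abs_natFloor_sub_natFloor_le (by positivity : 0 ≤ t * 2 ^ n)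
    (by positivity : 0 ≤ s * 2 ^ n)
  rw [← sub_mul, abs_mul, abs_of_pos (by positivity : (0 : ℝ) < 2 ^ n)] at hfloor
  calc dist (dyadicApprox mid P Q s n) (dyadicApprox mid P Q t n)
      ≤ |(⌊t * 2 ^ n⌋₊ : ℝ) - ⌊s * 2 ^ n⌋₊| * (dist P Q / 2 ^ n) :=
        dist_dyadicGrid_le P Q hmid n _ _
    _ ≤ (|t - s| * 2 ^ n + 1) * (dist P Q / 2 ^ n) := by gcongr
    _ = dist P Q * dist s t + dist P Q / 2 ^ n := by
        rw [Real.dist_eq, abs_sub_comm]; field_simp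

lemma dist_dyadicApprox_succ_le {t : ℝ} (ht : 0 ≤ t) (n : ℕ) :
    dist (dyadicApprox mid P Q t n) (dyadicApprox mid P Q t (n + 1)) ≤
      3 * dist P Q / 2 / 2 ^ n := by
  set x := t * 2 ^ n
  have hx : 0 ≤ x := by positivity
  have h₁ := Nat.abs_floor_sub_le (by positivity : 0 ≤ 2 * x)
  have h₂ := Nat.abs_sub_floor_le hx
  have hfloor : |(⌊t * 2 ^ (n + 1)⌋₊ : ℝ) - ↑(2 * ⌊x⌋₊)| ≤ 3 := by
    rw [show t * 2 ^ (n + 1) = 2 * x by ring, Nat.cast_mul, Nat.cast_two]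
    calc _ = |(⌊2 * x⌋₊ - 2 * x) + 2 * (x - ⌊x⌋₊)| := by ring_nf
      _ ≤ |(⌊2 * x⌋₊ : ℝ) - 2 * x| + 2 * |x - ⌊x⌋₊| := by
          grw [abs_add_le, abs_mul, abs_two]
      _ ≤ 3 := by linarith
  calc dist (dyadicApprox mid P Q t n) (dyadicApprox mid P Q t (n + 1))
      = dist (dyadicGrid mid P Q (n + 1) (2 * ⌊x⌋₊))
          (dyadicGrid mid P Q (n + 1) ⌊t * 2 ^ (n + 1)⌋₊) := by
        rw [dyadicGrid_succ_two_mul]; rfl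
    _ ≤ 3 * (dist P Q / 2 ^ (n + 1)) := by
        grw [dist_dyadicGrid_le P Q hmid, hfloor]
    _ = 3 * dist P Q / 2 / 2 ^ n := by ring

variable [CompleteSpace M]

variable (mid) in
def dyadicPath (t : ℝ) : M :=
  haveI : Nonempty M := ⟨P⟩
  limUnder atTop (dyadicApprox mid P Q t)

lemma tendsto_dyadicApprox {t : ℝ} (ht : 0 ≤ t) :
    Tendsto (dyadicApprox mid P Q t) atTop (𝓝 (dyadicPath mid P Q t)) :=
  (cauchySeq_of_le_geometric_two (dist_dyadicApprox_succ_le P Q hmid ht)).tendsto_limUnder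

lemma dist_dyadicPath_le {s t : ℝ} (hs : 0 ≤ s) (ht : 0 ≤ t) :
    dist (dyadicPath mid P Q s) (dyadicPath mid P Q t) ≤ dist P Q * dist s t := by
  have hlim : Tendsto (fun n : ℕ ↦ dist P Q * dist s t + dist P Q / 2 ^ n) atTop
      (𝓝 (dist P Q * dist s t + 0)) :=
    tendsto_const_nhds.add <|
      tendsto_const_nhds.div_atTop (tendsto_pow_atTop_atTop_of_one_lt one_lt_two)
  rw [add_zero] at hlim
  exact le_of_tendsto_of_tendsto' ((tendsto_dyadicApprox P Q hmid hs).dist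
    (tendsto_dyadicApprox P Q hmid ht)) hlim (dist_dyadicApprox_le P Q hmid hs ht)

lemma dyadicPath_zero : dyadicPath mid P Q 0 = P := by
  refine tendsto_nhds_unique (tendsto_dyadicApprox P Q hmid le_rfl) ?_
  exact tendsto_const_nhds.congr fun n ↦ by simp [dyadicApprox]

lemma dyadicPath_one : dyadicPath mid P Q 1 = Q := by
  refine tendsto_nhds_unique (tendsto_dyadicApprox P Q hmid zero_le_one) ?_
  exact tendsto_const_nhds.congr fun n ↦ by
    rw [dyadicApprox, one_mul, ← Nat.cast_ofNat, ← Nat.cast_pow, Nat.floor_natCast,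
      dyadicGrid_two_pow]

lemma dist_add_dist_dyadicPath {t : ℝ} (ht : t ∈ Set.Icc (0 : ℝ) 1) :
    dist P (dyadicPath mid P Q t) + dist (dyadicPath mid P Q t) Q = dist P Q := by
  have hclosed : IsClosed {x : M | dist P x + dist x Q = dist P Q} :=
    isClosed_eq (by fun_prop) continuous_const
  refine hclosed.mem_of_tendsto (tendsto_dyadicApprox P Q hmid ht.1)
    (Eventually.of_forall fun n ↦ ?_)
  refine dist_add_dist_dyadicGrid P Q hmid (Nat.floor_le_of_le ?_)
  calc t * 2 ^ n ≤ 1 * 2 ^ n := by gcongr; exact ht.2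
    _ = ((2 ^ n : ℕ) : ℝ) := by simp

end MidpointPath

end

open MidpointPath in
/-- in a compact metric space with a convex (Menger) metric, any two
points are joined by a continuous path along which distances add up. -/
theorem stmt10 {M : Type*} [MetricSpace M] [CompactSpace M]
    (hconv : ∀ P Q : M, P ≠ Q → ∃ R : M,
      dist P R = dist P Q / 2 ∧ dist R Q = dist P Q / 2) :
    ∀ P Q : M, ∃ γ : ℝ → M, ContinuousOn γ (Set.Icc 0 1) ∧ γ 0 = P ∧ γ 1 = Q ∧
      ∀ t ∈ Set.Icc (0 : ℝ) 1, dist P Q = dist P (γ t) + dist (γ t) Q := by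
  intro P Q
  have hmid : ∀ a b : M, ∃ r, dist a r ≤ dist a b / 2 ∧ dist r b ≤ dist a b / 2 := by
    intro a b
    rcases eq_or_ne a b with rfl | hab
    · exact ⟨a, by simp⟩
    · obtain ⟨r, har, hrb⟩ := hconv a b hab
      exact ⟨r, har.le, hrb.le⟩
  choose mid hmid using hmid
  refine ⟨dyadicPath mid P Q, ?_, dyadicPath_zero P Q hmid, dyadicPath_one P Q hmid,
    fun t ht ↦ (dist_add_dist_dyadicPath P Q hmid ht).symm⟩
  exact (LipschitzOnWith.of_dist_le' fun s hs t ht ↦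
    dist_dyadicPath_le P Q hmid hs.1 ht.1).continuousOn
end

section
/- Let X = {A, R} ∪ {fʲ(x₀) : j ∈ ℤ} ⊂ ℝ be a compact set where (fʲ(x₀)) is a strictly monotone sequence with fʲ(x₀) → A as j → +∞ and fʲ(x₀) → R as j → −∞, dist(A,R) > 2α, dist(x₀, f(x₀)) ≥ α and dist(x₀, f⁻¹(x₀)) ≥ α. Define F(A) = F(R) = {A,R} and F(fᵏ(x₀)) = {A, R, f^{k+1}(x₀), f^{k−1}(x₀)}. Then for every x = fᵏ(x₀) and n ≥ 1, Fⁿ(x) = {A, R, fⁿ(x), f^{n−2}(x), ..., f^{2−n}(x), f^{−n}(x)}, and in particular the cardinality of Fⁿ(x) is n + 3. -/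
open Metric Filter

/-- for the counterexample map `F` on
`X = {A, R} ∪ {g j : j ∈ ℤ}` (where `g j = fʲ(x₀)` is strictly monotone, `g j → A` as
`j → +∞`, `g j → R` as `j → -∞`), the iterates satisfy
`Fⁿ(g k) = {A, R} ∪ {g (k+j) : |j| ≤ n, n - j even}` and have cardinality `n + 3`. -/
theorem stmt15 (A R : ℝ) (g : ℤ → ℝ) (hmono : StrictMono g)
    (hA : Tendsto g atTop (nhds A)) (hR : Tendsto g atBot (nhds R))
    (α : ℝ) (hAR : 2 * α < dist A R)
    (h1 : α ≤ dist (g 0) (g 1)) (h2 : α ≤ dist (g 0) (g (-1)))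
    (F : ℝ → Set ℝ) (hFA : F A = {A, R}) (hFR : F R = {A, R})
    (hFg : ∀ j : ℤ, F (g j) = {A, R, g (j + 1), g (j - 1)}) :
    ∀ k : ℤ, ∀ n : ℕ, 1 ≤ n →
      iterS F n {g k} =
        {A, R} ∪ (fun j : ℤ => g (k + j)) '' {j : ℤ | j.natAbs ≤ n ∧ ((n : ℤ) - j) % 2 = 0} ∧
      (iterS F n {g k}).ncard = n + 3 := by
  intro k n hn
  -- basic order facts
  have hgA : ∀ j : ℤ, g j < A := fun j =>
    lt_of_lt_of_le (hmono (lt_add_one j)) (hmono.monotone.ge_of_tendsto hA (j + 1))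
  have hgR : ∀ j : ℤ, R < g j := fun j =>
    lt_of_le_of_lt (hmono.monotone.le_of_tendsto hR (j - 1)) (hmono (by omega))
  have hAne : A ≠ R := ne_of_gt (lt_trans (hgR 0) (hgA 0))
  -- the key set identity, by induction
  have key : ∀ m : ℕ, iterS F (m + 1) {g k} =
      {A, R} ∪ (fun j : ℤ => g (k + j)) ''
        {j : ℤ | j.natAbs ≤ m + 1 ∧ (((m + 1 : ℕ) : ℤ) - j) % 2 = 0} := by
    intro m
    induction m with
    | zero =>
      have h0 : iterS F 1 {g k} = F (g k) := by
        simp [iterS]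
      rw [h0, hFg k]
      ext x
      simp only [Set.mem_insert_iff, Set.mem_singleton_iff, Set.mem_union, Set.mem_image,
        Set.mem_setOf_eq]
      constructor
      · rintro (rfl | rfl | rfl | rfl)
        · exact Or.inl (Or.inl rfl)
        · exact Or.inl (Or.inr rfl)
        · exact Or.inr ⟨1, ⟨by omega, by omega⟩, rfl⟩
        · exact Or.inr ⟨-1, ⟨by omega, by omega⟩, by rw [show k + -1 = k - 1 by ring]⟩
      · rintro ((rfl | rfl) | ⟨j, ⟨hj1, hj2⟩, rfl⟩)
        · exact Or.inl rfl
        · exact Or.inr (Or.inl rfl)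
        · have : j = 1 ∨ j = -1 := by omega
          rcases this with rfl | rfl
          · exact Or.inr (Or.inr (Or.inl rfl))
          · exact Or.inr (Or.inr (Or.inr (by rw [show k + -1 = k - 1 by ring])))
    | succ m ih =>
      have h0 : iterS F (m + 1 + 1) {g k} = ⋃ y ∈ iterS F (m + 1) {g k}, F y := by
        simp [iterS]
      rw [h0, ih]
      ext x
      simp only [Set.mem_union, Set.mem_insert_iff, Set.mem_singleton_iff, Set.mem_image,
        Set.mem_setOf_eq, Set.mem_iUnion, exists_prop]
      constructor
      · rintro ⟨y, hy, hx⟩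
        rcases hy with ((rfl | rfl) | ⟨j, ⟨hj1, hj2⟩, rfl⟩)
        · rw [hFA] at hx
          rcases hx with rfl | rfl
          · exact Or.inl (Or.inl rfl)
          · exact Or.inl (Or.inr rfl)
        · rw [hFR] at hx
          rcases hx with rfl | rfl
          · exact Or.inl (Or.inl rfl)
          · exact Or.inl (Or.inr rfl)
        · rw [hFg (k + j)] at hx
          rcases hx with rfl | rfl | rfl | rfl
          · exact Or.inl (Or.inl rfl)
          · exact Or.inl (Or.inr rfl)
          · exact Or.inr ⟨j + 1, ⟨by omega, by omega⟩, by rw [show k + (j + 1) = k + j + 1 by ring]⟩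
          · exact Or.inr ⟨j - 1, ⟨by omega, by omega⟩, by rw [show k + (j - 1) = k + j - 1 by ring]⟩
      · rintro ((rfl | rfl) | ⟨j, ⟨hj1, hj2⟩, rfl⟩)
        · exact ⟨x, Or.inl (Or.inl rfl), by rw [hFA]; exact Or.inl rfl⟩
        · exact ⟨A, Or.inl (Or.inl rfl), by rw [hFA]; exact Or.inr rfl⟩
        · by_cases h : -(m : ℤ) ≤ j
          · refine ⟨g (k + (j - 1)), Or.inr ⟨j - 1, ⟨by omega, by omega⟩, rfl⟩, ?_⟩
            rw [hFg (k + (j - 1))]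
            exact Or.inr (Or.inr (Or.inl (by rw [show k + (j - 1) + 1 = k + j by ring])))
          · refine ⟨g (k + (j + 1)), Or.inr ⟨j + 1, ⟨by omega, by omega⟩, rfl⟩, ?_⟩
            rw [hFg (k + (j + 1))]
            exact Or.inr (Or.inr (Or.inr (by
              rw [show k + (j + 1) - 1 = k + j by ring]; exact Set.mem_singleton _)))
  obtain ⟨m, rfl⟩ : ∃ m, n = m + 1 := ⟨n - 1, by omega⟩
  refine ⟨key m, ?_⟩
  rw [key m]
  set idx : Set ℤ := {j : ℤ | j.natAbs ≤ m + 1 ∧ (((m + 1 : ℕ) : ℤ) - j) % 2 = 0} with hidx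
  have hidxeq : idx = ↑((Finset.range (m + 2)).image (fun i : ℕ => -((m : ℤ) + 1) + 2 * i)) := by
    ext j
    simp only [hidx, Set.mem_setOf_eq, Finset.coe_image, Set.mem_image, Finset.mem_coe,
      Finset.mem_range]
    constructor
    · rintro ⟨hj1, hj2⟩
      exact ⟨((j + (m + 1)) / 2).toNat, by omega, by omega⟩
    · rintro ⟨i, hi, rfl⟩
      constructor <;> omega
  have hinj : Function.Injective (fun i : ℕ => -((m : ℤ) + 1) + 2 * i) := by
    intro a b hab
    simp only at hab
    omega
  have hidxcard : idx.ncard = m + 2 := by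
    rw [hidxeq, Set.ncard_coe_finset, Finset.card_image_of_injective _ hinj, Finset.card_range]
  have hidxfin : idx.Finite := by
    rw [hidxeq]; exact Finset.finite_toSet _
  have hginj : Function.Injective (fun j : ℤ => g (k + j)) := by
    intro a b hab
    have := hmono.injective hab
    omega
  have hSfin : ((fun j : ℤ => g (k + j)) '' idx).Finite := hidxfin.image _
  have hScard : ((fun j : ℤ => g (k + j)) '' idx).ncard = m + 2 := by
    rw [Set.ncard_image_of_injective _ hginj, hidxcard]
  have hRnot : R ∉ (fun j : ℤ => g (k + j)) '' idx := by
    rintro ⟨j, -, hj⟩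
    exact absurd hj (ne_of_gt (hgR (k + j)))
  have hAnot : A ∉ insert R ((fun j : ℤ => g (k + j)) '' idx) := by
    rintro (rfl | ⟨j, -, hj⟩)
    · exact hAne rfl
    · exact absurd hj (ne_of_lt (hgA (k + j)))
  rw [show ({A, R} : Set ℝ) ∪ (fun j : ℤ => g (k + j)) '' idx
      = insert A (insert R ((fun j : ℤ => g (k + j)) '' idx)) by
    rw [Set.insert_union, Set.singleton_union]]
  rw [Set.ncard_insert_of_notMem hAnot (hSfin.insert R),
    Set.ncard_insert_of_notMem hRnot hSfin, hScard]
end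

section
/- With X, f, F as in the previous context (dist(A,R) > 2α, dist(x₀, f(x₀)) ≥ α, dist(x₀, f⁻¹(x₀)) ≥ α, and the sequence strictly monotone), the set-valued map F is positively expansive with constant α: for all x ≠ y in X there exists n ∈ ℕ with d_H(Fⁿ(x), Fⁿ(y)) > α (or ≥ α). -/
open Metric Filter

lemma iterS_mono {M : Type*} (F : M → Set M) :
    ∀ (n : ℕ) {K K' : Set M}, K ⊆ K' → iterS F n K ⊆ iterS F n K'
  | 0, _, _, h => h
  | n + 1, K, K', h => by
    simp only [iterS]
    exact Set.iUnion₂_mono' fun y hy => ⟨y, iterS_mono F n h hy, subset_rfl⟩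

lemma iterS_succ_eq {M : Type*} (F : M → Set M) :
    ∀ (n : ℕ) (K : Set M), iterS F (n + 1) K = iterS F n (⋃ y ∈ K, F y)
  | 0, K => rfl
  | n + 1, K => by
    show (⋃ y ∈ iterS F (n+1) K, F y) = iterS F (n+1) (⋃ y ∈ K, F y)
    rw [iterS_succ_eq F n K]
    rfl

/-- Points `g 0` is in the `|j|`-th iterate of `{g j}`. -/
lemma g0_mem (A R : ℝ) (g : ℤ → ℝ) (F : ℝ → Set ℝ)
    (hFg : ∀ j : ℤ, F (g j) = {A, R, g (j + 1), g (j - 1)}) :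
    ∀ (n : ℕ) (j : ℤ), j.natAbs = n → g 0 ∈ iterS F n {g j} := by
  intro n
  induction n with
  | zero =>
    intro j hj
    have : j = 0 := Int.natAbs_eq_zero.mp hj
    simp [this, iterS]
  | succ n ih =>
    intro j hj
    rw [iterS_succ_eq]
    have hj0 : j ≠ 0 := by
      intro h; simp [h] at hj
    rcases lt_or_gt_of_ne hj0 with hneg | hpos
    · -- j < 0 : step to j + 1
      have h1 : (j + 1).natAbs = n := by omega
      refine iterS_mono F n ?_ (ih (j + 1) h1)
      intro z hz
      simp only [Set.mem_singleton_iff] at hz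
      subst hz
      simp only [Set.mem_iUnion, Set.mem_singleton_iff]
      exact ⟨g j, rfl, by rw [hFg j]; simp⟩
    · -- j > 0 : step to j - 1
      have h1 : (j - 1).natAbs = n := by omega
      refine iterS_mono F n ?_ (ih (j - 1) h1)
      intro z hz
      simp only [Set.mem_singleton_iff] at hz
      subst hz
      simp only [Set.mem_iUnion, Set.mem_singleton_iff]
      exact ⟨g j, rfl, by rw [hFg j]; simp⟩

/-- The iterates of `{A}` or `{R}` stay inside `{A, R}`. -/
lemma iter_AR (A R : ℝ) (F : ℝ → Set ℝ) (hFA : F A = {A, R}) (hFR : F R = {A, R}) :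
    ∀ (n : ℕ) (K : Set ℝ), K ⊆ {A, R} → iterS F n K ⊆ {A, R} := by
  intro n
  induction n with
  | zero => intro K hK; exact hK
  | succ n ih =>
    intro K hK
    show (⋃ y ∈ iterS F n K, F y) ⊆ {A, R}
    intro z hz
    simp only [Set.mem_iUnion] at hz
    obtain ⟨y, hy, hzy⟩ := hz
    rcases ih K hK hy with h | h <;> subst h
    · rwa [hFA] at hzy
    · rwa [hFR] at hzy

/-- Description of the iterates of `{g j}`: everything is `A`, `R`, or `g m`
with `|m - j| ≤ n`. -/
lemma iter_g_subset (A R : ℝ) (g : ℤ → ℝ) (F : ℝ → Set ℝ)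
    (hFA : F A = {A, R}) (hFR : F R = {A, R})
    (hFg : ∀ j : ℤ, F (g j) = {A, R, g (j + 1), g (j - 1)}) :
    ∀ (n : ℕ) (j : ℤ), iterS F n {g j} ⊆
      {A, R} ∪ {x | ∃ m : ℤ, (m - j).natAbs ≤ n ∧ x = g m} := by
  intro n
  induction n with
  | zero =>
    intro j x hx
    simp only [iterS, Set.mem_singleton_iff] at hx
    exact Or.inr ⟨j, by simp, hx⟩
  | succ n ih =>
    intro j x hx
    simp only [iterS, Set.mem_iUnion] at hx
    obtain ⟨y, hy, hxy⟩ := hx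
    rcases ih j hy with h | ⟨m, hm, rfl⟩
    · rcases h with h | h <;> subst h
      · rw [hFA] at hxy; exact Or.inl hxy
      · rw [hFR] at hxy; exact Or.inl hxy
    · rw [hFg m] at hxy
      rcases hxy with h | h | h | h
      · exact Or.inl (Or.inl h)
      · exact Or.inl (Or.inr h)
      · exact Or.inr ⟨m + 1, by omega, h⟩
      · exact Or.inr ⟨m - 1, by omega, h⟩

lemma le_infDist' {x : ℝ} {s : Set ℝ} (hs : s.Nonempty) {r : ℝ}
    (h : ∀ y ∈ s, r ≤ dist x y) : r ≤ infDist x s := by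
  rw [infDist_eq_iInf]
  haveI : Nonempty ↥s := hs.to_subtype
  exact le_ciInf fun y => h y y.2

lemma dist_le_hausdorffDist_singleton (a b : ℝ) :
    dist a b ≤ hausdorffDist ({a} : Set ℝ) ({b} : Set ℝ) := by
  have hne : EMetric.hausdorffEdist ({a} : Set ℝ) ({b} : Set ℝ) ≠ ⊤ :=
    hausdorffEdist_ne_top_of_nonempty_of_bounded (Set.singleton_nonempty a)
      (Set.singleton_nonempty b) (Set.finite_singleton a).isBounded
      (Set.finite_singleton b).isBounded
  have h := infDist_le_hausdorffDist_of_mem (Set.mem_singleton a) hne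
  rwa [infDist_singleton] at h

/-- the counterexample set-valued map `F` on
`X = {A, R} ∪ {g j : j ∈ ℤ}` is positively expansive with constant `α`: any two distinct
points of `X` have iterates `α`-separated in the Hausdorff distance at some time. -/
theorem stmt16 (A R : ℝ) (g : ℤ → ℝ) (hmono : StrictMono g)
    (hA : Tendsto g atTop (nhds A)) (hR : Tendsto g atBot (nhds R))
    (α : ℝ) (hAR : 2 * α < dist A R)
    (h1 : α ≤ dist (g 0) (g 1)) (h2 : α ≤ dist (g 0) (g (-1)))
    (F : ℝ → Set ℝ) (hFA : F A = {A, R}) (hFR : F R = {A, R})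
    (hFg : ∀ j : ℤ, F (g j) = {A, R, g (j + 1), g (j - 1)}) :
    ∀ x ∈ ({A, R} ∪ Set.range g : Set ℝ), ∀ y ∈ ({A, R} ∪ Set.range g : Set ℝ),
      x ≠ y → ∃ n : ℕ, α ≤ hausdorffDist (iterS F n {x}) (iterS F n {y}) := by
  -- dispose of the trivial case α ≤ 0
  rcases le_or_gt α 0 with hα | hα
  · intro x _ y _ _
    exact ⟨0, hα.trans hausdorffDist_nonneg⟩
  -- basic order facts
  have hgA : ∀ m : ℤ, g m < A := fun m =>
    lt_of_lt_of_le (hmono (lt_add_one m)) (hmono.monotone.ge_of_tendsto hA (m + 1))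
  have hgR : ∀ m : ℤ, R < g m := fun m =>
    lt_of_le_of_lt (hmono.monotone.le_of_tendsto hR (m - 1)) (hmono (sub_one_lt m))
  have hRA : R < A := (hgR 0).trans (hgA 0)
  have h1' : α ≤ g 1 - g 0 := by
    rwa [Real.dist_eq, abs_of_nonpos (by linarith [hmono (show (0:ℤ) < 1 by norm_num)]),
      neg_sub] at h1
  have h2' : α ≤ g 0 - g (-1) := by
    rwa [Real.dist_eq, abs_of_nonneg (by linarith [hmono (show (-1:ℤ) < 0 by norm_num)])] at h2
  -- key separation: g 0 is α-far from A, R and every g m with m ≠ 0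
  have hsep : ∀ z : ℝ, z ∈ ({A, R} ∪ {x | ∃ m : ℤ, m ≠ 0 ∧ x = g m} : Set ℝ) →
      α ≤ dist (g 0) z := by
    rintro z (⟨rfl | rfl⟩ | ⟨m, hm, rfl⟩)
    · rw [Real.dist_eq, abs_of_nonpos (by linarith [hgA 0]), neg_sub]
      linarith [hgA 1]
    · rw [Real.dist_eq, abs_of_nonneg (by linarith [hgR 0])]
      linarith [hgR (-1)]
    · rcases lt_or_gt_of_ne hm with hneg | hpos
      · rw [Real.dist_eq, abs_of_nonneg (by linarith [hmono hneg])]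
        have : g m ≤ g (-1) := hmono.monotone (by omega)
        linarith
      · rw [Real.dist_eq, abs_of_nonpos (by linarith [hmono hpos]), neg_sub]
        have : g 1 ≤ g m := hmono.monotone (by omega)
        linarith
  -- everything lives in [R, A]
  have hbig : ({A, R} ∪ {x | ∃ m : ℤ, x = g m} : Set ℝ) ⊆ Set.Icc R A := by
    rintro z (⟨rfl | rfl⟩ | ⟨m, rfl⟩)
    · exact ⟨hRA.le, le_rfl⟩
    · exact ⟨le_rfl, hRA.le⟩
    · exact ⟨(hgR m).le, (hgA m).le⟩
  -- iterates of singletons from X are nonempty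
  have hnonempty : ∀ (n : ℕ) (x : ℝ), x ∈ ({A, R} ∪ Set.range g : Set ℝ) →
      ∃ z ∈ iterS F n {x}, z ∈ ({A, R} ∪ Set.range g : Set ℝ) := by
    intro n
    induction n with
    | zero => intro x hx; exact ⟨x, rfl, hx⟩
    | succ n ih =>
      intro x hx
      obtain ⟨z, hz, hzX⟩ := ih x hx
      refine ⟨A, ?_, Or.inl (Or.inl rfl)⟩
      simp only [iterS, Set.mem_iUnion]
      refine ⟨z, hz, ?_⟩
      rcases hzX with ⟨rfl | rfl⟩ | ⟨m, rfl⟩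
      · rw [hFA]; exact Or.inl rfl
      · rw [hFR]; exact Or.inl rfl
      · rw [hFg m]; exact Or.inl rfl
  -- iterates are bounded
  have hboundedA : ∀ (n : ℕ) (x : ℝ), x ∈ ({A, R} ∪ Set.range g : Set ℝ) →
      iterS F n {x} ⊆ Set.Icc R A := by
    intro n x hx
    rcases hx with (hx | hx) | ⟨j, rfl⟩
    · subst x
      exact fun z hz => hbig (Or.inl (iter_AR A R F hFA hFR n _ (by simp) hz))
    · subst x
      exact fun z hz => hbig (Or.inl (iter_AR A R F hFA hFR n _ (by simp) hz))
    · intro z hz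
      rcases iter_g_subset A R g F hFA hFR hFg n j hz with h | ⟨m, _, rfl⟩
      · exact hbig (Or.inl h)
      · exact hbig (Or.inr ⟨m, rfl⟩)
  -- main Hausdorff bound machine: if `g 0` lies in the n-th iterate of `{x}` and the n-th
  -- iterate of `{y}` avoids `g 0`'s α-neighborhood, we win.
  have main : ∀ (n : ℕ) (x y : ℝ), x ∈ ({A, R} ∪ Set.range g : Set ℝ) →
      y ∈ ({A, R} ∪ Set.range g : Set ℝ) →
      g 0 ∈ iterS F n {x} →
      (iterS F n {y} ⊆ {A, R} ∪ {z | ∃ m : ℤ, m ≠ 0 ∧ z = g m}) →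
      α ≤ hausdorffDist (iterS F n {x}) (iterS F n {y}) := by
    intro n x y hx hy hg0 hsub
    obtain ⟨w, hw, _⟩ := hnonempty n y hy
    have hfin : EMetric.hausdorffEdist (iterS F n {x}) (iterS F n {y}) ≠ ⊤ :=
      hausdorffEdist_ne_top_of_nonempty_of_bounded ⟨g 0, hg0⟩ ⟨w, hw⟩
        ((isBounded_Icc R A).subset (hboundedA n x hx))
        ((isBounded_Icc R A).subset (hboundedA n y hy))
    calc α ≤ infDist (g 0) (iterS F n {y}) :=
            le_infDist' ⟨w, hw⟩ fun z hz => hsep z (hsub hz)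
      _ ≤ hausdorffDist (iterS F n {x}) (iterS F n {y}) :=
            infDist_le_hausdorffDist_of_mem hg0 hfin
  -- now the case analysis
  intro x hx y hy hxy
  have hgm_ne : ∀ (j : ℤ), g j ≠ A ∧ g j ≠ R := fun j => ⟨(hgA j).ne, (hgR j).ne'⟩
  rcases hx with (hx | hx) | ⟨j, rfl⟩ <;>
    [subst x; subst x; skip] <;>
    rcases hy with (hy | hy) | ⟨k, rfl⟩ <;>
    first
      | (subst y; skip)
      | skip
  · exact absurd rfl hxy
  · -- A vs R
    refine ⟨0, ?_⟩
    have hd : α ≤ dist A R := by linarith [dist_nonneg (x := A) (y := R)]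
    simp only [iterS]
    exact hd.trans (dist_le_hausdorffDist_singleton A R)
  · -- A vs g k
    refine ⟨k.natAbs, ?_⟩
    rw [hausdorffDist_comm]
    refine main k.natAbs (g k) A (Or.inr ⟨k, rfl⟩) (Or.inl (Or.inl rfl))
      (g0_mem A R g F hFg k.natAbs k rfl) ?_
    intro z hz
    exact Or.inl (iter_AR A R F hFA hFR _ _ (by simp) hz)
  · -- R vs A
    refine ⟨0, ?_⟩
    have hd : α ≤ dist R A := by rw [dist_comm]; linarith [dist_nonneg (x := A) (y := R)]
    simp only [iterS]
    exact hd.trans (dist_le_hausdorffDist_singleton R A)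
  · exact absurd rfl hxy
  · -- R vs g k
    refine ⟨k.natAbs, ?_⟩
    rw [hausdorffDist_comm]
    refine main k.natAbs (g k) R (Or.inr ⟨k, rfl⟩) (Or.inl (Or.inr rfl))
      (g0_mem A R g F hFg k.natAbs k rfl) ?_
    intro z hz
    exact Or.inl (iter_AR A R F hFA hFR _ _ (by simp) hz)
  · -- g j vs A
    refine ⟨j.natAbs, ?_⟩
    refine main j.natAbs (g j) A (Or.inr ⟨j, rfl⟩) (Or.inl (Or.inl rfl))
      (g0_mem A R g F hFg j.natAbs j rfl) ?_
    intro z hz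
    exact Or.inl (iter_AR A R F hFA hFR _ _ (by simp) hz)
  · -- g j vs R
    refine ⟨j.natAbs, ?_⟩
    refine main j.natAbs (g j) R (Or.inr ⟨j, rfl⟩) (Or.inl (Or.inr rfl))
      (g0_mem A R g F hFg j.natAbs j rfl) ?_
    intro z hz
    exact Or.inl (iter_AR A R F hFA hFR _ _ (by simp) hz)
  · -- g j vs g k
    have hjk : j ≠ k := fun h => hxy (by rw [h])
    -- helper for the asymmetric case |j| < |k|
    have asymm : ∀ j' k' : ℤ, j'.natAbs < k'.natAbs →
        α ≤ hausdorffDist (iterS F j'.natAbs {g j'}) (iterS F j'.natAbs {g k'}) := by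
      intro j' k' hlt
      refine main j'.natAbs (g j') (g k') (Or.inr ⟨j', rfl⟩) (Or.inr ⟨k', rfl⟩)
        (g0_mem A R g F hFg j'.natAbs j' rfl) ?_
      intro z hz
      rcases iter_g_subset A R g F hFA hFR hFg j'.natAbs k' hz with h | ⟨m, hm, rfl⟩
      · exact Or.inl h
      · exact Or.inr ⟨m, by omega, rfl⟩
    rcases lt_trichotomy j.natAbs k.natAbs with hlt | heq | hgt
    · exact ⟨j.natAbs, asymm j k hlt⟩
    · -- j = -k, k ≠ 0 (in particular, |g j - g k| ≥ 2α)
      have hjneg : j = -k := by omega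
      have hk0 : k ≠ 0 := by omega
      refine ⟨0, ?_⟩
      have hd : α ≤ dist (g j) (g k) := by
        rcases lt_or_gt_of_ne hk0 with hneg | hpos
        · have ha : g 1 ≤ g j := hmono.monotone (by omega)
          have hb : g k ≤ g (-1) := hmono.monotone (by omega)
          rw [Real.dist_eq, abs_of_nonneg (by linarith)]
          linarith
        · have ha : g 1 ≤ g k := hmono.monotone (by omega)
          have hb : g j ≤ g (-1) := hmono.monotone (by omega)
          rw [Real.dist_eq, abs_of_nonpos (by linarith), neg_sub]
          linarith
      simp only [iterS]
      exact hd.trans (dist_le_hausdorffDist_singleton (g j) (g k))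
    · refine ⟨k.natAbs, ?_⟩
      rw [hausdorffDist_comm]
      exact asymm k j hgt
end
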